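/- Define ξ(z) = z + √(z+1)·√(z−1) for z ∈ ℂ, with principal branches of the square roots. Then for any ζ ∈ ℂ with |ζ| > 1, the Joukowski transform z = (ζ + ζ⁻¹)/2 satisfies ξ(z) = ζ; i.e., ξ is the inverse of the Joukowski map on the exterior of the unit disk. -/

import Mathlib

/-!
Write `a = √(z+1)` and `b = √(z-1)`. The numbers `z ± ab` have sum `2z` and product
`z² - a²b² = 1`, so for `z = (ζ + ζ⁻¹)/2` they are `ζ` and `ζ⁻¹` in some order. Principal square
roots have nonnegative real part, and since `z + 1` and `z - 1` have the same imaginary part the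
imaginary parts of `a` and `b` have the same sign; hence `Re (a * conj b) ≥ 0`, i.e.
`‖a - b‖ ≤ ‖a + b‖`, i.e. `‖z - ab‖ ≤ ‖z + ab‖` because `z ± ab = (a ± b)² / 2`.
As `‖ζ⁻¹‖ < ‖ζ‖`, the root `z + ab` is `ζ`.
-/

open Complex ComplexConjugate

lemma eq_of_add_eq_add_inv_of_mul_eq_one {K : Type*} [NormedField K] {ζ w w' : K}
    (hζ : 1 < ‖ζ‖) (hsum : w + w' = ζ + ζ⁻¹) (hprod : w * w' = 1) (hle : ‖w'‖ ≤ ‖w‖) :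
    w = ζ := by
  have hζ0 : ζ ≠ 0 := norm_pos_iff.mp (one_pos.trans hζ)
  have hroots : (w - ζ) * (w - ζ⁻¹) = 0 := by
    linear_combination w * hsum - hprod + mul_inv_cancel₀ hζ0
  refine sub_eq_zero.mp ((mul_eq_zero.mp hroots).resolve_right fun hw => ?_)
  have hw' : w' = ζ := by linear_combination hsum - hw
  rw [sub_eq_zero.mp hw, hw', norm_inv] at hle
  exact absurd hle (not_le.mpr ((inv_lt_one_of_one_lt₀ hζ).trans hζ))

namespace Complex

lemma sqrt_sq (u : ℂ) : sqrt u ^ 2 = u := cpow_ofNat_inv_pow u 2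

lemma re_sqrt_nonneg (u : ℂ) : 0 ≤ (sqrt u).re := by
  rw [sqrt, cpow_inv_two_re]
  exact Real.sqrt_nonneg _

lemma im_sqrt_mul_im_sqrt_nonneg {u v : ℂ} (h : u.im = v.im) :
    0 ≤ (sqrt u).im * (sqrt v).im := by
  simp only [sqrt]
  rcases le_or_gt 0 u.im with hu | hu
  · rw [cpow_inv_two_im_eq_sqrt hu, cpow_inv_two_im_eq_sqrt (h ▸ hu)]
    positivity
  · rw [cpow_inv_two_im_eq_neg_sqrt hu, cpow_inv_two_im_eq_neg_sqrt (h ▸ hu), neg_mul_neg]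
    positivity

lemma norm_sub_le_norm_add_of_re_mul_conj_nonneg {a b : ℂ} (h : 0 ≤ (a * conj b).re) :
    ‖a - b‖ ≤ ‖a + b‖ := by
  rw [← sq_le_sq₀ (norm_nonneg _) (norm_nonneg _), ← normSq_eq_norm_sq, ← normSq_eq_norm_sq,
    normSq_sub, normSq_add]
  linarith

lemma norm_sqrt_sub_sqrt_le {u v : ℂ} (h : u.im = v.im) :
    ‖sqrt u - sqrt v‖ ≤ ‖sqrt u + sqrt v‖ := by
  refine norm_sub_le_norm_add_of_re_mul_conj_nonneg ?_
  rw [mul_re, conj_re, conj_im]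
  nlinarith [mul_nonneg (re_sqrt_nonneg u) (re_sqrt_nonneg v), im_sqrt_mul_im_sqrt_nonneg h]

lemma norm_sub_sqrt_mul_sqrt_le (z : ℂ) :
    ‖z - sqrt (z + 1) * sqrt (z - 1)‖ ≤ ‖z + sqrt (z + 1) * sqrt (z - 1)‖ := by
  have hz : z = (sqrt (z + 1) ^ 2 + sqrt (z - 1) ^ 2) / 2 := by
    rw [sqrt_sq, sqrt_sq]; ring
  have hsub : z - sqrt (z + 1) * sqrt (z - 1) = (sqrt (z + 1) - sqrt (z - 1)) ^ 2 / 2 := by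
    nth_rw 1 [hz]; ring
  have hadd : z + sqrt (z + 1) * sqrt (z - 1) = (sqrt (z + 1) + sqrt (z - 1)) ^ 2 / 2 := by
    nth_rw 1 [hz]; ring
  rw [hsub, hadd, norm_div, norm_div, norm_pow, norm_pow]
  gcongr
  exact norm_sqrt_sub_sqrt_le (by simp)

end Complex

/-- With `ξ(z) = z + √(z+1)·√(z−1)` (principal branches), for `|ζ| > 1` the Joukowski
transform `z = (ζ + ζ⁻¹)/2` satisfies `ξ(z) = ζ`. -/
theorem xi_inverse_joukowski (ζ : ℂ) (h : 1 < ‖ζ‖) :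
    ((ζ + ζ⁻¹)/2) + ((ζ + ζ⁻¹)/2 + 1)^((1:ℂ)/2) * ((ζ + ζ⁻¹)/2 - 1)^((1:ℂ)/2) = ζ := by
  set z := (ζ + ζ⁻¹) / 2
  have hsqrt (u : ℂ) : u ^ ((1 : ℂ) / 2) = sqrt u := by rw [one_div]; rfl
  simp only [hsqrt]
  refine eq_of_add_eq_add_inv_of_mul_eq_one h (w' := z - sqrt (z + 1) * sqrt (z - 1)) ?_ ?_
    (norm_sub_sqrt_mul_sqrt_le z)
  · ring
  · linear_combination -sqrt (z - 1) ^ 2 * sqrt_sq (z + 1) - (z + 1) * sqrt_sq (z - 1)
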